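/- Let D₉ be the digraph on the nine vertices x₁,x₂,x₃,y₁,y₂,y₃,z₁,z₂,z₃ with edge set consisting of: all nine edges (y_j, x_i) for i,j ∈ {1,2,3}; the directed triangle edges (z₁,z₂), (z₂,z₃), (z₃,z₁); and all eighteen edges (z_i, x_j) and (z_i, y_j) for i,j ∈ {1,2,3}. Let p : {x₁,x₂,x₃} → {1,2} be a partial vertex-coloring. Then p can be extended to a majority coloring of D₉ using only colors 1 and 2 if and only if p(x_i) ≠ p(x_j) for some i,j ∈ {1,2,3}. -/

import Mathlib

open scoped Classical

variable {V : Type*} [Fintype V]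

/-- The out-neighborhood of `v` in the digraph on `V` with edge relation `E`. -/
noncomputable def outNbrs (E : V → V → Prop) (v : V) : Finset V :=
  Finset.univ.filter (fun w => E v w)

/-- The in-neighborhood of `v` in the digraph on `V` with edge relation `E`. -/
noncomputable def inNbrs (E : V → V → Prop) (v : V) : Finset V :=
  Finset.univ.filter (fun w => E w v)

/-- `c` is a majority coloring of the digraph `(V, E)`: every vertex `v` has at
most `d⁺(v)/2` out-neighbors `w` with `c w = c v`. -/
def IsMajorityColoring {α : Type*} (E : V → V → Prop) (c : V → α) : Prop :=
  ∀ v : V, 2 * ((outNbrs E v).filter (fun w => c w = c v)).card ≤ (outNbrs E v).card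

/-- `l` is the vertex list of a directed cycle: a nonempty list of pairwise
distinct vertices in which each vertex has an edge to the next one, and the
last vertex has an edge back to the first one. -/
def IsDiCycle (E : V → V → Prop) (l : List V) : Prop :=
  l ≠ [] ∧ l.Nodup ∧ l.Chain' E ∧
    ∃ a b, l.head? = some a ∧ l.getLast? = some b ∧ E b a

/-- All vertices of the list `l` get the same color under `c`. -/
def MonochromaticList {α : Type*} (c : V → α) (l : List V) : Prop :=
  ∀ u ∈ l, ∀ w ∈ l, c u = c w

/-- The digraph `(V, E)` is majority `k`-choosable: for every assignment of
lists of size at least `k` to the vertices there is a majority coloring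
choosing each vertex's color from its list. -/
def MajorityChoosable (E : V → V → Prop) (k : ℕ) : Prop :=
  ∀ L : V → Finset ℕ, (∀ v, k ≤ (L v).card) →
    ∃ c : V → ℕ, (∀ v, c v ∈ L v) ∧ IsMajorityColoring E c

/-- The vertex set of the digraph `D₉`: three vertices `x₁,x₂,x₃`, three
vertices `y₁,y₂,y₃` and three vertices `z₁,z₂,z₃`. -/
abbrev V9 : Type := Fin 3 ⊕ (Fin 3 ⊕ Fin 3)

/-- The vertex `xᵢ` of `D₉`. -/
def xv (i : Fin 3) : V9 := Sum.inl i

/-- The vertex `yⱼ` of `D₉`. -/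
def yv (j : Fin 3) : V9 := Sum.inr (Sum.inl j)

/-- The vertex `zᵢ` of `D₉`. -/
def zv (i : Fin 3) : V9 := Sum.inr (Sum.inr i)

/-- The edge relation of `D₉`: all nine edges `(yⱼ, xᵢ)`, the directed
triangle `(z₁,z₂), (z₂,z₃), (z₃,z₁)`, and all eighteen edges `(zᵢ, xⱼ)` and
`(zᵢ, yⱼ)`. -/
def E9 : V9 → V9 → Prop := fun a b =>
  (∃ j i : Fin 3, a = yv j ∧ b = xv i) ∨
  (∃ i : Fin 3, a = zv i ∧ b = zv (i + 1)) ∨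
  (∃ i j : Fin 3, a = zv i ∧ (b = xv j ∨ b = yv j))

/-!
In `D₉` the vertices `xᵢ` are sinks, the out-neighbourhood of each `yⱼ` is `{x₁, x₂, x₃}`, and each
`zᵢ` has the seven out-neighbours `zᵢ₊₁`, `x₁, x₂, x₃`, `y₁, y₂, y₃`.

If all `xᵢ` get the same colour `a`, every `yⱼ` must get the other colour. Then exactly three of the
six out-neighbours `xⱼ, yⱼ` of `zᵢ` share its colour, so `zᵢ₊₁` must be coloured differently from
`zᵢ`: a proper 2-colouring of the directed triangle `z₁z₂z₃`, which does not exist.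

If the `xᵢ` are not monochromatic, some colour `a` occurs on exactly two of them. Colouring every
`yⱼ` with the other colour and every `zᵢ` with `a` gives a majority colouring.
-/

open Finset

theorem Finset.card_filter_sum_type {α β : Type*} [Fintype α] [Fintype β] (P : α ⊕ β → Prop)
    [DecidablePred P] : #{w | P w} = #{a | P (Sum.inl a)} + #{b | P (Sum.inr b)} := by
  simp only [card_filter, Fintype.sum_sum_type]

theorem Fin.exists_apply_add_one_eq {β : Type*} [Fintype β] (hβ : Fintype.card β < 3)
    (f : Fin 3 → β) : ∃ i, f (i + 1) = f i := by
  obtain ⟨i, j, hij, hf⟩ := Fintype.exists_ne_map_eq_of_card_lt f (by simpa using hβ)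
  -- any two distinct vertices of the triangle are adjacent
  obtain h | h : j = i + 1 ∨ i = j + 1 := by omega
  · exact ⟨i, h ▸ hf.symm⟩
  · exact ⟨j, h ▸ hf⟩

theorem Fin.exists_card_fiber_eq_two {β : Type*} [Fintype β] [DecidableEq β]
    (hβ : Fintype.card β ≤ 2) {p : Fin 3 → β} (hp : ∃ i j, p i ≠ p j) :
    ∃ a, #{i | p i = a} = 2 := by
  obtain ⟨a, ha⟩ := Fintype.exists_lt_card_fiber_of_mul_lt_card p (n := 1)
    (by rw [mul_one, Fintype.card_fin]; omega)
  obtain ⟨k, hk⟩ : ∃ k, p k ≠ a := by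
    obtain ⟨i, j, hij⟩ := hp
    rcases eq_or_ne (p i) a with h | h
    exacts [⟨j, h ▸ hij.symm⟩, ⟨i, h⟩]
  have hlt := card_lt_univ_of_notMem (s := {i | p i = a}) (by simpa using hk)
  rw [Fintype.card_fin] at hlt
  exact ⟨a, by omega⟩

theorem V9.forall {P : V9 → Prop} :
    (∀ v, P v) ↔ (∀ i, P (xv i)) ∧ (∀ j, P (yv j)) ∧ ∀ i, P (zv i) := by
  simp only [Sum.forall, xv, yv, zv]

theorem outNbrs_E9_xv (i : Fin 3) : outNbrs E9 (xv i) = ∅ := by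
  ext w
  simp [outNbrs, E9, xv, yv, zv]

theorem card_filter_outNbrs_E9_yv (Q : V9 → Prop) (j : Fin 3) :
    #{w ∈ outNbrs E9 (yv j) | Q w} = #{i | Q (xv i)} := by
  rw [outNbrs, filter_filter, card_filter_sum_type, card_filter_sum_type]
  simp only [E9, xv, yv, zv, Sum.inl.injEq, Sum.inr.injEq, reduceCtorEq, exists_and_left,
    ↓existsAndEq, exists_eq', exists_const, and_true, and_false, and_self, true_and, false_and,
    or_false, false_or, or_self, filter_false, card_empty, add_zero]
  congr!

theorem card_filter_outNbrs_E9_zv (Q : V9 → Prop) (i : Fin 3) :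
    #{w ∈ outNbrs E9 (zv i) | Q w} =
      #{j | Q (xv j)} + #{j | Q (yv j)} + if Q (zv (i + 1)) then 1 else 0 := by
  rw [outNbrs, filter_filter, card_filter_sum_type, card_filter_sum_type]
  simp only [E9, xv, yv, zv, Sum.inl.injEq, Sum.inr.injEq, reduceCtorEq, exists_and_left,
    ↓existsAndEq, exists_eq', exists_eq_left', exists_const, and_true, and_false, and_self, true_and,
    false_and, or_true, or_false, false_or, or_self, ← filter_filter, filter_eq', mem_univ,
    ↓reduceIte, filter_singleton, apply_ite card, card_singleton, card_empty, add_assoc]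
  congr!

theorem isMajorityColoring_E9_iff {α : Type*} [DecidableEq α] (c : V9 → α) :
    IsMajorityColoring E9 c ↔
      (∀ j, 2 * #{i | c (xv i) = c (yv j)} ≤ 3) ∧
      ∀ i, 2 * (#{j | c (xv j) = c (zv i)} + #{j | c (yv j) = c (zv i)} +
        if c (zv (i + 1)) = c (zv i) then 1 else 0) ≤ 7 := by
  have deg_y (j : Fin 3) : #(outNbrs E9 (yv j)) = 3 := by
    simpa using card_filter_outNbrs_E9_yv (fun _ => True) j
  have deg_z (i : Fin 3) : #(outNbrs E9 (zv i)) = 7 := by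
    simpa using card_filter_outNbrs_E9_zv (fun _ => True) i
  simp only [IsMajorityColoring, V9.forall, outNbrs_E9_xv, card_filter_outNbrs_E9_yv,
    card_filter_outNbrs_E9_zv, deg_y, deg_z, filter_empty, card_empty, mul_zero, le_refl,
    implies_true, true_and]
  -- `outNbrs` filters with classical decidability instances
  congr!

theorem exists_isMajorityColoring_E9_extending {p : Fin 3 → Fin 2} (hp : ∃ i j, p i ≠ p j) :
    ∃ c : V9 → Fin 2, IsMajorityColoring E9 c ∧ ∀ i, c (xv i) = p i := by
  obtain ⟨a, ha⟩ := Fin.exists_card_fiber_eq_two (by simp) hp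
  have hb : #{i | p i = a + 1} = 1 := by
    have hsplit : #{i | p i = a} + #{i | ¬p i = a} = 3 := card_filter_add_card_filter_not _
    rw [ha, filter_congr fun i _ => show ¬p i = a ↔ p i = a + 1 by omega] at hsplit
    omega
  have hne : a + 1 ≠ a := by omega
  refine ⟨Sum.elim p (Sum.elim (fun _ => a + 1) fun _ => a), ?_, fun _ => rfl⟩
  refine (isMajorityColoring_E9_iff _).mpr ⟨fun j => ?_, fun i => ?_⟩
  -- `show` rather than `simp`, which cannot reach the `Sum.elim` inside the decidability instances
  · show 2 * #{i | p i = a + 1} ≤ 3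
    omega
  · show 2 * (#{j | p j = a} + #{_j : Fin 3 | a + 1 = a} + if a = a then 1 else 0) ≤ 7
    simp [ha, hne]

theorem exists_ne_of_isMajorityColoring_E9 {c : V9 → Fin 2} (hc : IsMajorityColoring E9 c) :
    ∃ i j, c (xv i) ≠ c (xv j) := by
  by_contra! hconst
  set a := c (xv 0)
  have hx (i : Fin 3) : c (xv i) = a := hconst i 0
  obtain ⟨hmaj_y, hmaj_z⟩ := (isMajorityColoring_E9_iff c).mp hc
  have hy (j : Fin 3) : c (yv j) = a + 1 := by
    by_contra h
    have := hmaj_y j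
    simp [hx, show c (yv j) = a by omega] at this
  have hz (i : Fin 3) : c (zv (i + 1)) ≠ c (zv i) := by
    intro h
    have := hmaj_z i
    obtain h' | h' : c (zv i) = a ∨ c (zv i) = a + 1 := by omega
    all_goals simp [hx, hy, h, h'] at this
  obtain ⟨i, hi⟩ := Fin.exists_apply_add_one_eq (by simp) (c ∘ zv)
  exact hz i hi

/-- A partial coloring `p` of the vertices `x₁,x₂,x₃` of
`D₉` with colors `{1,2}` extends to a majority coloring of `D₉` using colors
`{1,2}` if and only if `p(xᵢ) ≠ p(xⱼ)` for some `i, j`. -/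
theorem D9_precoloring_extends_iff (p : Fin 3 → Fin 2) :
    (∃ c : V9 → Fin 2, IsMajorityColoring E9 c ∧ ∀ i : Fin 3, c (xv i) = p i) ↔
      ∃ i j : Fin 3, p i ≠ p j := by
  constructor
  · rintro ⟨c, hc, hcp⟩
    simpa only [hcp] using exists_ne_of_isMajorityColoring_E9 hc
  · exact exists_isMajorityColoring_E9_extending
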